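/- arXiv:2203.15075 — 5 statements merged into one kernel-verified Lean document; each statement's English description precedes it below -/
import Mathlib

section
/- Fix ρ ∈ (0,1) and let η ∈ (0,ρ]. There is no ϑ ∈ (0,1) satisfying simultaneously √(1−ϑ) > η(1−ρ)/(√(1+η²−2ρη) − 1 + ρη) and √(1−ϑ) ≤ (1+η)(1−ρ)/((1+ρ)√(1+η²−2ρη)); equivalently, η(1−ρ)/(√(1+η²−2ρη) − 1 + ρη) ≥ (1+η)(1−ρ)/((1+ρ)√(1+η²−2ρη)) whenever the left denominator is positive. -/
/-- Elimination of a spurious Elastic-net phase curve: when the left denominator is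
positive, the lower bound on `√(1−ϑ)` exceeds the upper bound. -/
theorem stmt_3 (ρ η : ℝ) (hρ : ρ ∈ Set.Ioo (0 : ℝ) 1) (hη : η ∈ Set.Ioc (0 : ℝ) ρ)
    (hden : 0 < Real.sqrt (1 + η ^ 2 - 2 * ρ * η) - 1 + ρ * η) :
    (¬ ∃ ϑ : ℝ, ϑ ∈ Set.Ioo (0 : ℝ) 1 ∧
        η * (1 - ρ) / (Real.sqrt (1 + η ^ 2 - 2 * ρ * η) - 1 + ρ * η) < Real.sqrt (1 - ϑ) ∧
        Real.sqrt (1 - ϑ) ≤ (1 + η) * (1 - ρ) / ((1 + ρ) * Real.sqrt (1 + η ^ 2 - 2 * ρ * η))) ∧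
    η * (1 - ρ) / (Real.sqrt (1 + η ^ 2 - 2 * ρ * η) - 1 + ρ * η) ≥
      (1 + η) * (1 - ρ) / ((1 + ρ) * Real.sqrt (1 + η ^ 2 - 2 * ρ * η)) := by
  obtain ⟨hρ0, hρ1⟩ := hρ
  obtain ⟨hη0, hηρ⟩ := hη
  set s := Real.sqrt (1 + η ^ 2 - 2 * ρ * η) with hs
  have hA : (0:ℝ) ≤ 1 + η ^ 2 - 2 * ρ * η := by nlinarith
  have hs0 : 0 ≤ s := Real.sqrt_nonneg _
  have hsle : s ≤ 1 + η := by
    rw [hs, show (1:ℝ) + η = Real.sqrt ((1 + η) ^ 2) by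
      rw [Real.sqrt_sq (by linarith)]]
    exact Real.sqrt_le_sqrt (by nlinarith)
  have hspos : 0 < s := by nlinarith
  have hge : η * (1 - ρ) / (s - 1 + ρ * η) ≥
      (1 + η) * (1 - ρ) / ((1 + ρ) * s) := by
    rw [ge_iff_le, div_le_div_iff₀ (by positivity) hden]
    nlinarith [mul_nonneg (mul_nonneg (by linarith : (0:ℝ) ≤ 1 - ρ) (by nlinarith : (0:ℝ) ≤ 1 - ρ * η)) (sub_nonneg.2 hsle)]
  refine ⟨?_, hge⟩
  rintro ⟨ϑ, _, h1, h2⟩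
  exact absurd (h1.trans_le h2) (not_lt.2 hge)
end

section
/- Consider the bivariate Elastic net objective L(b) = (1/2)·bᵀ M b − bᵀh + √q·(|b₁|+|b₂|) + (μ/2)·‖b‖², with M = [[1,ρ],[ρ,1]], h₁ > |h₂| ≥ 0, ρ ∈ [0,1), μ ≥ 0, and set η = ρ/(1+μ). If h₂ ≥ η·h₁ and (h₂ − η·h₁)/(1−η) ≤ √q < h₁, then the minimizer is b̂₁ = (h₁−√q)/(1+μ) > 0 and b̂₂ = 0. -/
/-!
The objective is a convex quadratic plus `√q · ‖b‖₁`, so a point is a global minimizer as soon as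
the gradient of the quadratic part is cancelled by `√q` times a subgradient of `‖·‖₁`. At
`b̂ = ((h₁ - √q)/(1 + μ), 0)` the first coordinate is positive, which forces the first subgradient
to be `1`; `√q` times the second one must be `h₂ - ρ b̂₁`, and the two inequalities on `h₂` say
exactly that `|h₂ - ρ b̂₁| ≤ √q`, because `ρ b̂₁ = η (h₁ - √q)`.
-/

/-- Bivariate Elastic-net objective. -/
noncomputable def enObj (ρ μ q h1 h2 b1 b2 : ℝ) : ℝ :=
  (1 / 2) * (b1 ^ 2 + 2 * ρ * b1 * b2 + b2 ^ 2) - (b1 * h1 + b2 * h2)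
    + Real.sqrt q * (|b1| + |b2|) + (μ / 2) * (b1 ^ 2 + b2 ^ 2)

lemma quadForm_nonneg {ρ μ : ℝ} (hρ : |ρ| ≤ 1 + μ) (x y : ℝ) :
    0 ≤ (1 + μ) * (x ^ 2 + y ^ 2) + 2 * ρ * x * y := by
  have hxy : |2 * ρ * x * y| ≤ (1 + μ) * (x ^ 2 + y ^ 2) :=
    calc |2 * ρ * x * y| = |ρ| * (2 * |x| * |y|) := by
          simp only [abs_mul, abs_two]; ring
      _ ≤ (1 + μ) * (x ^ 2 + y ^ 2) := by
          have hμ : 0 ≤ 1 + μ := (abs_nonneg ρ).trans hρ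
          gcongr
          nlinarith [sq_nonneg (|x| - |y|), sq_abs x, sq_abs y]
  linarith [neg_abs_le (2 * ρ * x * y)]

lemma mul_le_mul_abs_of_abs_le {u s : ℝ} (hu : |u| ≤ s) (b : ℝ) : u * b ≤ s * |b| :=
  calc u * b ≤ |u * b| := le_abs_self _
    _ = |u| * |b| := abs_mul u b
    _ ≤ s * |b| := by gcongr

lemma enObj_sub_enObj (ρ μ q h1 h2 a1 a2 b1 b2 : ℝ) :
    enObj ρ μ q h1 h2 b1 b2 - enObj ρ μ q h1 h2 a1 a2 =
      ((1 + μ) * ((b1 - a1) ^ 2 + (b2 - a2) ^ 2) + 2 * ρ * (b1 - a1) * (b2 - a2)) / 2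
        + ((1 + μ) * a1 + ρ * a2 - h1) * (b1 - a1) + (ρ * a1 + (1 + μ) * a2 - h2) * (b2 - a2)
        + Real.sqrt q * (|b1| + |b2| - |a1| - |a2|) := by
  unfold enObj; ring

/-- Subgradient optimality: `uᵢ` stands for `√q · sᵢ` with `sᵢ ∈ ∂|·|(aᵢ)`, which avoids dividing
by `√q` when `q ≤ 0`. -/
theorem enObj_le_of_subgradient {ρ μ q h1 h2 a1 a2 u1 u2 : ℝ} (hρ : |ρ| ≤ 1 + μ)
    (hu1 : |u1| ≤ Real.sqrt q) (hu2 : |u2| ≤ Real.sqrt q)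
    (ha1 : u1 * a1 = Real.sqrt q * |a1|) (ha2 : u2 * a2 = Real.sqrt q * |a2|)
    (hstat1 : (1 + μ) * a1 + ρ * a2 + u1 = h1) (hstat2 : ρ * a1 + (1 + μ) * a2 + u2 = h2)
    (b1 b2 : ℝ) :
    enObj ρ μ q h1 h2 a1 a2 ≤ enObj ρ μ q h1 h2 b1 b2 := by
  have hdiff := enObj_sub_enObj ρ μ q h1 h2 a1 a2 b1 b2
  have hquad := quadForm_nonneg hρ (b1 - a1) (b2 - a2)
  have hb1 := mul_le_mul_abs_of_abs_le hu1 b1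
  have hb2 := mul_le_mul_abs_of_abs_le hu2 b2
  subst hstat1 hstat2
  linarith

theorem stmt_6_general (ρ μ q h1 h2 : ℝ) (hρ : ρ ∈ Set.Ico (0 : ℝ) 1) (hμ : 0 ≤ μ)
    (hη : h2 ≥ (ρ / (1 + μ)) * h1)
    (hq1 : (h2 - (ρ / (1 + μ)) * h1) / (1 - ρ / (1 + μ)) ≤ Real.sqrt q)
    (hq2 : Real.sqrt q < h1) :
    0 < (h1 - Real.sqrt q) / (1 + μ) ∧
    ∀ b1 b2 : ℝ,
      enObj ρ μ q h1 h2 ((h1 - Real.sqrt q) / (1 + μ)) 0 ≤ enObj ρ μ q h1 h2 b1 b2 := by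
  obtain ⟨hρ0, hρ1⟩ := hρ
  set s := Real.sqrt q
  set η := ρ / (1 + μ)
  set β := (h1 - s) / (1 + μ)
  have hμ1 : 0 < 1 + μ := by linarith
  have hβ : 0 < β := div_pos (sub_pos.2 hq2) hμ1
  have hρβ : ρ * β = η * (h1 - s) := by simp only [β, η]; ring
  have hη0 : 0 ≤ η * s := mul_nonneg (div_nonneg hρ0 hμ1.le) (Real.sqrt_nonneg q)
  have hη1 : 0 < 1 - η := sub_pos.2 ((div_lt_one hμ1).2 (by linarith))
  have hlower : ρ * β ≤ h2 := by linarith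
  have hupper : h2 - ρ * β ≤ s := by
    have := (div_le_iff₀ hη1).1 hq1
    linarith
  refine ⟨hβ, enObj_le_of_subgradient (u1 := s) (u2 := h2 - ρ * β) ?_ ?_ ?_ ?_ (by simp) ?_ ?_⟩
  · rw [abs_of_nonneg hρ0]; linarith
  · exact (abs_of_nonneg (Real.sqrt_nonneg q)).le
  · exact abs_le.2 ⟨by linarith, hupper⟩
  · rw [abs_of_pos hβ, mul_comm]
  · simp only [β]; field_simp; ring
  · ring

/-- Middle segment of the Elastic-net solution path: with `η = ρ/(1+μ)`, if
`h₂ ≥ η h₁` and `(h₂−ηh₁)/(1−η) ≤ √q < h₁`, the minimizer is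
`((h₁−√q)/(1+μ), 0)` with positive first coordinate. -/
theorem stmt_6 (ρ μ q h1 h2 : ℝ) (hρ : ρ ∈ Set.Ico (0 : ℝ) 1) (hμ : 0 ≤ μ)
    (hh : |h2| < h1)
    (hη : h2 ≥ (ρ / (1 + μ)) * h1)
    (hq1 : (h2 - (ρ / (1 + μ)) * h1) / (1 - ρ / (1 + μ)) ≤ Real.sqrt q)
    (hq2 : Real.sqrt q < h1) :
    0 < (h1 - Real.sqrt q) / (1 + μ) ∧
    ∀ b1 b2 : ℝ,
      enObj ρ μ q h1 h2 ((h1 - Real.sqrt q) / (1 + μ)) 0 ≤ enObj ρ μ q h1 h2 b1 b2 :=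
  stmt_6_general ρ μ q h1 h2 hρ hμ hη hq1 hq2
end

section
/- For all ρ ∈ (0,1), √((1−ρ)/(1+ρ))·(√((5+3ρ)/((1−ρ)(2+ρ)²)) − 1/√(1−ρ²)) < 1/(1+ρ). -/
/-- Algebraic inequality eliminating a candidate SCAD phase curve:
`√((1−ρ)/(1+ρ))·(√((5+3ρ)/((1−ρ)(2+ρ)²)) − 1/√(1−ρ²)) < 1/(1+ρ)` for `ρ ∈ (0,1)`. -/
theorem stmt_11 (ρ : ℝ) (hρ : ρ ∈ Set.Ioo (0 : ℝ) 1) :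
    Real.sqrt ((1 - ρ) / (1 + ρ)) *
        (Real.sqrt ((5 + 3 * ρ) / ((1 - ρ) * (2 + ρ) ^ 2)) - 1 / Real.sqrt (1 - ρ ^ 2)) <
      1 / (1 + ρ) := by
  obtain ⟨h0, h1⟩ := hρ
  have ht0 : (0:ℝ) < 1 - ρ := by linarith
  have hs0 : (0:ℝ) < 1 + ρ := by linarith
  have h2ρ : (0:ℝ) < 2 + ρ := by linarith
  set t := Real.sqrt (1 - ρ) with htdef
  set s := Real.sqrt (1 + ρ) with hsdef
  set u := Real.sqrt (5 + 3 * ρ) with hudef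
  have htpos : 0 < t := Real.sqrt_pos.mpr ht0
  have hspos : 0 < s := Real.sqrt_pos.mpr hs0
  have hupos : 0 < u := Real.sqrt_pos.mpr (by linarith)
  have ht2 : t ^ 2 = 1 - ρ := Real.sq_sqrt ht0.le
  have hs2 : s ^ 2 = 1 + ρ := Real.sq_sqrt hs0.le
  have hu2 : u ^ 2 = 5 + 3 * ρ := Real.sq_sqrt (by linarith)
  have e1 : Real.sqrt ((1 - ρ) / (1 + ρ)) = t / s := Real.sqrt_div ht0.le _
  have e2 : Real.sqrt ((5 + 3 * ρ) / ((1 - ρ) * (2 + ρ) ^ 2)) = u / (t * (2 + ρ)) := by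
    rw [Real.sqrt_div (by linarith), Real.sqrt_mul ht0.le,
      Real.sqrt_sq h2ρ.le]
  have e3 : Real.sqrt (1 - ρ ^ 2) = t * s := by
    rw [show (1 - ρ ^ 2 : ℝ) = (1 - ρ) * (1 + ρ) by ring, Real.sqrt_mul ht0.le]
  rw [e1, e2, e3]
  have key : u * s < 2 * (2 + ρ) := by
    nlinarith [sq_nonneg (u * s - 2 * (2 + ρ)), sq_nonneg (u - s), mul_pos hupos hspos]
  rw [div_mul_eq_mul_div, div_lt_div_iff₀ hspos hs0, one_mul]
  have e4 : t * (u / (t * (2 + ρ)) - 1 / (t * s)) * (1 + ρ) = u * s ^ 2 / (2 + ρ) - s := by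
    rw [← hs2]; field_simp
  rw [e4, sub_lt_iff_lt_add, div_lt_iff₀ h2ρ]
  nlinarith [key, mul_pos hupos hspos]
end

section
/- For ρ ∈ (0,1), the thresholded-Lasso phase curves satisfy: the curve √r = √((1−ϑ)/(1−ρ²)) + (2ρ+2−√(1−ρ²))/(1+ρ)² is ≥ max{1+√(1−ϑ), 2√((1−ϑ)/(1−ρ²))} whenever (1−ρ)/(1+ρ) ≤ √(1−ϑ) ≤ (2√(1−ρ²)−(1−ρ))/(1+ρ). -/
/-- Elimination of the fifth candidate curve for thresholded Lasso with `ρ ∈ (0,1)`. -/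
theorem stmt_15 (ρ ϑ : ℝ) (hρ : ρ ∈ Set.Ioo (0 : ℝ) 1) (hϑ : ϑ ∈ Set.Ioo (0 : ℝ) 1)
    (hlo : (1 - ρ) / (1 + ρ) ≤ Real.sqrt (1 - ϑ))
    (hhi : Real.sqrt (1 - ϑ) ≤ (2 * Real.sqrt (1 - ρ ^ 2) - (1 - ρ)) / (1 + ρ)) :
    max (1 + Real.sqrt (1 - ϑ)) (2 * Real.sqrt ((1 - ϑ) / (1 - ρ ^ 2))) ≤
      Real.sqrt ((1 - ϑ) / (1 - ρ ^ 2))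
        + (2 * ρ + 2 - Real.sqrt (1 - ρ ^ 2)) / (1 + ρ) ^ 2 := by
  obtain ⟨hρ0, hρ1⟩ := hρ
  obtain ⟨hϑ0, hϑ1⟩ := hϑ
  set s := Real.sqrt (1 - ϑ) with hs
  set t := Real.sqrt (1 - ρ ^ 2) with ht
  have hρp : (0:ℝ) < 1 + ρ := by linarith
  have ht2 : t ^ 2 = 1 - ρ ^ 2 := Real.sq_sqrt (by nlinarith)
  have ht0 : 0 < t := Real.sqrt_pos.2 (by nlinarith)
  have ht1 : t ≤ 1 := by nlinarith [ht2]
  have hs0 : 0 ≤ s := Real.sqrt_nonneg _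
  have hA : (0:ℝ) < (1 + ρ) ^ 2 := by positivity
  have hdiv : Real.sqrt ((1 - ϑ) / (1 - ρ ^ 2)) = s / t := by
    rw [Real.sqrt_div (by linarith) ]
  rw [hdiv]
  have hlo' : 1 - ρ ≤ s * (1 + ρ) := by
    rw [div_le_iff₀ hρp] at hlo; linarith
  have hhi' : s * (1 + ρ) ≤ 2 * t - (1 - ρ) := by
    rw [le_div_iff₀ hρp] at hhi; linarith
  apply max_le
  · rw [div_add_div _ _ ht0.ne' hA.ne', le_div_iff₀ (by positivity)]
    have key : 0 ≤ (1 - t) * (s * (1 + ρ) ^ 2 - t ^ 2) := by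
      apply mul_nonneg (by linarith)
      nlinarith
    nlinarith [key, ht2]
  · have : s / t ≤ (2 * ρ + 2 - t) / (1 + ρ) ^ 2 := by
      rw [div_le_div_iff₀ ht0 hA]
      nlinarith
    linarith
end

section
/- For the forward-backward selection case analysis: define v'_min(ϑ,ρ) = max{1, √((1−ϑ)/(1−ρ²))} for ρ ∈ (−1,1), ϑ ∈ (0,1). Then for all ρ with |ρ| ≤ 0.576 and all ϑ ∈ (0,1), max{ v'_min + √(1−ϑ), √((1−2ϑ)₊/(1−ρ²)) + v'_min } ≥ √(2(1−ϑ)/(1−|ρ|)). -/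
/-!
It suffices to compare with the first piece, bounding `v'_min` below by `√((1-ϑ)/(1-ρ²))`.
Factoring out `√(1-ϑ)` and writing `r = |ρ|`, the claim becomes `√(2/(1-r)) ≤ 1 + 1/√(1-r²)`.
Squaring, this is `r(r+2) ≤ 2√(1-r²)`, i.e. the quartic inequality `r²(r+2)² ≤ 4(1-r²)`,
which holds for `0 ≤ r ≤ 0.576` (its positive root is `r ≈ 0.6085`).
-/

open Real

lemma sq_mul_add_two_sq_le (r : ℝ) (hr₀ : 0 ≤ r) (hr : r ≤ 0.576) :
    (r * (r + 2)) ^ 2 ≤ 4 * (1 - r ^ 2) := by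
  norm_num at hr
  nlinarith [mul_nonneg hr₀ hr₀, mul_nonneg (mul_nonneg hr₀ hr₀) hr₀]

lemma sqrt_two_div_one_sub_le (r : ℝ) (hr₀ : 0 ≤ r) (hr : r ≤ 0.576) :
    √(2 / (1 - r)) ≤ 1 + √((1 - r ^ 2)⁻¹) := by
  have hr₁ : r < 1 := by norm_num at hr; linarith
  rw [sqrt_inv]
  set s := √(1 - r ^ 2)
  have hs₀ : 0 < s := sqrt_pos.2 (by nlinarith)
  have hs₂ : s ^ 2 = 1 - r ^ 2 := sq_sqrt (by nlinarith)
  have hkey : r * (r + 2) ≤ 2 * s :=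
    le_of_pow_le_pow_left₀ two_ne_zero (by positivity)
      (by rw [mul_pow 2 s, hs₂]; linarith [sq_mul_add_two_sq_le r hr₀ hr])
  rw [sqrt_le_left (by positivity), div_le_iff₀ (by linarith)]
  field_simp
  nlinarith

lemma sqrt_two_mul_div_one_sub_le (t r : ℝ) (hr₀ : 0 ≤ r) (hr : r ≤ 0.576) :
    √(2 * t / (1 - r)) ≤ √t + √(t / (1 - r ^ 2)) := by
  have hr₁ : r < 1 := by norm_num at hr; linarith
  have hr₂ : 0 ≤ 1 - r ^ 2 := by nlinarith
  calc √(2 * t / (1 - r)) = √t * √(2 / (1 - r)) := by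
        rw [← sqrt_mul' t (by positivity), mul_div_assoc', mul_comm t]
    _ ≤ √t * (1 + √((1 - r ^ 2)⁻¹)) := by gcongr; exact sqrt_two_div_one_sub_le r hr₀ hr
    _ = √t + √(t / (1 - r ^ 2)) := by
        rw [mul_one_add, ← sqrt_mul' t (inv_nonneg.2 hr₂), div_eq_mul_inv]

theorem stmt_18_general (ρ ϑ : ℝ) (hρ' : |ρ| ≤ 0.576) :
    let vmin := max 1 (Real.sqrt ((1 - ϑ) / (1 - ρ ^ 2)))
    Real.sqrt (2 * (1 - ϑ) / (1 - |ρ|)) ≤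
      max (vmin + Real.sqrt (1 - ϑ))
        (Real.sqrt (max (1 - 2 * ϑ) 0 / (1 - ρ ^ 2)) + vmin) := by
  intro vmin
  calc √(2 * (1 - ϑ) / (1 - |ρ|)) ≤ √(1 - ϑ) + √((1 - ϑ) / (1 - |ρ| ^ 2)) :=
        sqrt_two_mul_div_one_sub_le _ _ (abs_nonneg ρ) hρ'
    _ ≤ vmin + √(1 - ϑ) := by rw [sq_abs, add_comm]; gcongr; exact le_max_right _ _
    _ ≤ _ := le_max_left _ _

/-- For `|ρ| ≤ 0.576`, the curve `√(2(1−ϑ)/(1−|ρ|))` is dominated by the other two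
candidate pieces of the forward-backward selection phase curve, where
`v'_min = max{1, √((1−ϑ)/(1−ρ²))}`. -/
theorem stmt_18 (ρ ϑ : ℝ) (hρ : ρ ∈ Set.Ioo (-1 : ℝ) 1) (hρ' : |ρ| ≤ 0.576)
    (hϑ : ϑ ∈ Set.Ioo (0 : ℝ) 1) :
    let vmin := max 1 (Real.sqrt ((1 - ϑ) / (1 - ρ ^ 2)))
    Real.sqrt (2 * (1 - ϑ) / (1 - |ρ|)) ≤
      max (vmin + Real.sqrt (1 - ϑ))
        (Real.sqrt (max (1 - 2 * ϑ) 0 / (1 - ρ ^ 2)) + vmin) :=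
  stmt_18_general ρ ϑ hρ'
end
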